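/- arXiv:1301.6408 — 2 statements merged into one kernel-verified Lean document; each statement's English description precedes it below -/
import Mathlib

section
/- Let X be a finite set and x : Fin n → X a sequence, with counts N(a) = #{t : x t = a}. Then n·log n − ∑_{a ∈ X} N(a)·log(N(a)) ≥ log(n! / ∏_{a ∈ X} N(a)!), interpreting 0·log 0 = 0. -/
/-!
Expanding `n^n = (∑ a, N(a))^n` by the multinomial theorem, the term indexed by the exponent
vector `N` itself is `n! / ∏ N(a)! · ∏ N(a)^N(a)`; dropping the other (nonnegative) terms and
taking logarithms gives the bound.
-/

open Finset

theorem Nat.multinomial_mul_prod_pow_le_sum_pow {α : Type*} [Fintype α] [DecidableEq α]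
    (k f : α → ℕ) :
    multinomial univ k * ∏ i, f i ^ k i ≤ (∑ i, f i) ^ ∑ i, k i := by
  rw [sum_pow_eq_sum_piAntidiag]
  exact single_le_sum (f := fun k => multinomial univ k * ∏ i, f i ^ k i)
    (fun _ _ => Nat.zero_le _) (mem_piAntidiag.mpr ⟨rfl, fun i _ => mem_univ i⟩)

theorem Nat.cast_multinomial {α K : Type*} [DecidableEq α] [Field K] [CharZero K]
    (s : Finset α) (f : α → ℕ) :
    (multinomial s f : K) = (∑ i ∈ s, f i).factorial / ∏ i ∈ s, ((f i).factorial : K) := by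
  have hprod : (∏ i ∈ s, ((f i).factorial : K)) ≠ 0 :=
    prod_ne_zero_iff.mpr fun i _ => Nat.cast_ne_zero.mpr (f i).factorial_ne_zero
  rw [eq_div_iff hprod, mul_comm]
  exact_mod_cast multinomial_spec s f

/-- With the convention `0 · log 0 = 0` built into `Real.log 0 = 0`. -/
theorem Real.log_multinomial_le {α : Type*} [Fintype α] [DecidableEq α] (f : α → ℕ) :
    log (Nat.multinomial univ f) ≤
      (∑ i, f i : ℕ) * log (∑ i, f i : ℕ) - ∑ i, (f i : ℝ) * log (f i) := by
  set m := ∑ i, f i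
  have hpos : ∀ j : ℕ, (0 : ℝ) < (j : ℝ) ^ j := fun j => by exact_mod_cast Nat.pow_self_pos
  have hle : (Nat.multinomial univ f : ℝ) * ∏ i, (f i : ℝ) ^ f i ≤ (m : ℝ) ^ m := by
    exact_mod_cast Nat.multinomial_mul_prod_pow_le_sum_pow f f
  have hprod : (0 : ℝ) < ∏ i, (f i : ℝ) ^ f i := prod_pos fun i _ => hpos (f i)
  have hmul : (0 : ℝ) < Nat.multinomial univ f := by exact_mod_cast Nat.multinomial_pos _ f
  have hlog := log_le_log (mul_pos hmul hprod) hle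
  rw [log_mul hmul.ne' hprod.ne',
    log_prod fun i _ => (hpos (f i)).ne', log_pow] at hlog
  simp only [log_pow] at hlog
  linarith

theorem type_class_log_bound {X : Type*} [Fintype X] [DecidableEq X]
    (n : ℕ) (x : Fin n → X) (N : X → ℕ)
    (hN : ∀ a, N a = (Finset.univ.filter (fun t => x t = a)).card) :
    Real.log ((n.factorial : ℝ) / ∏ a : X, ((N a).factorial : ℝ))
      ≤ (n : ℝ) * Real.log n - ∑ a : X, (N a : ℝ) * Real.log (N a) := by
  have hsum : ∑ a, N a = n := by
    simpa [hN] using (card_eq_sum_card_fiberwise (s := univ) (t := univ)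
      (fun t _ => mem_univ (x t))).symm
  have := Real.log_multinomial_le N
  rwa [Nat.cast_multinomial, hsum] at this
end

section
/- Let k be a positive integer and (h_t) a non-decreasing positive real sequence. Among all sequences x₁,…,x_n over an alphabet of size k, the sum ∑_{t=1}^n 1/(N_{t−1}(x_t) + h_t) (where N_{t−1}(a) counts occurrences of a among x₁,…,x_{t−1}) is maximized by the round-robin sequence, for which N_{t−1}(x_t) = ⌊(t−1)/k⌋; hence for every sequence, ∑_{t=1}^n 1/(N_{t−1}(x_t) + h_t) ≤ ∑_{t=1}^n 1/(⌊(t−1)/k⌋ + h_t). -/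
/-!
Write `c t` for the number of earlier occurrences of `x t`. Since `t ↦ (x t, c t)` is injective,
at most `(j + 1) k` times have `c t ≤ j`, and this counting bound is all that is used about `c`.
Induct on `n`: because `h` is monotone, moving the largest value of `c` to the last time `n + 1`
does not decrease the sum, keeps the counting bound on the first `n` times, and that largest value
is at least `n / k` by the counting bound.
-/

open Finset

lemma one_div_add_add_one_div_add_le {u v g g' : ℝ} (hug : 0 < u + g) (huv : u ≤ v)
    (hgg' : g ≤ g') : 1 / (v + g) + 1 / (u + g') ≤ 1 / (u + g) + 1 / (v + g') := by
  have hvg : 0 < v + g := by linarith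
  have hug' : 0 < u + g' := by linarith
  have hvg' : 0 < v + g' := by linarith
  rw [div_add_div _ _ hvg.ne' hug'.ne', div_add_div _ _ hug.ne' hvg'.ne',
    div_le_div_iff₀ (by positivity) (by positivity)]
  nlinarith [mul_nonneg (sub_nonneg.2 huv) (sub_nonneg.2 hgg'), mul_pos hug hvg,
    mul_pos hug' hvg']

lemma sum_le_sum_comp_swap {ι : Type*} [DecidableEq ι] {s : Finset ι} {a b : ι}
    (ha : a ∈ s) (hb : b ∈ s) (g : ι → ι → ℝ) (hg : g a a + g b b ≤ g b a + g a b) :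
    ∑ t ∈ s, g t t ≤ ∑ t ∈ s, g (Equiv.swap a b t) t := by
  obtain rfl | hab := eq_or_ne a b
  · simp
  rw [← sub_nonneg, ← sum_sub_distrib,
    sum_eq_add_of_mem a b ha hb hab fun t _ ht => by
      rw [Equiv.swap_apply_of_ne_of_ne ht.1 ht.2, sub_self]]
  simp only [Equiv.swap_apply_left, Equiv.swap_apply_right]
  linarith

lemma card_filter_comp_swap {ι : Type*} [DecidableEq ι] {s : Finset ι} {a b : ι}
    (ha : a ∈ s) (hb : b ∈ s) (p : ι → Prop) [DecidablePred p] :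
    #{t ∈ s | p (Equiv.swap a b t)} = #{t ∈ s | p t} := by
  refine card_equiv (Equiv.swap a b) fun t => ?_
  have hmem : t ∈ s ↔ Equiv.swap a b t ∈ s := by
    rw [Equiv.swap_apply_def]; split_ifs <;> simp_all
  simp [hmem]

lemma div_le_of_card_filter_le {s : Finset ℕ} {c : ℕ → ℕ} {k m n : ℕ} (hs : #s = n + 1)
    (hc : ∀ j, #{t ∈ s | c t ≤ j} ≤ (j + 1) * k) (hmax : ∀ t ∈ s, c t ≤ c m) :
    n / k ≤ c m := by
  by_contra! hlt
  have hall : #{t ∈ s | c t ≤ n / k - 1} = n + 1 := by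
    rw [filter_true_of_mem fun t ht => by have := hmax t ht; omega, hs]
  have hcount := hc (n / k - 1)
  rw [hall, Nat.sub_add_cancel (by omega)] at hcount
  have := Nat.div_mul_le_self n k
  omega

theorem sum_one_div_add_le_roundRobin {h : ℕ → ℝ} (hpos : ∀ t, 0 < h t) (hmono : Monotone h)
    (k n : ℕ) (c : ℕ → ℕ) (hc : ∀ j, #{t ∈ Icc 1 n | c t ≤ j} ≤ (j + 1) * k) :
    ∑ t ∈ Icc 1 n, 1 / ((c t : ℝ) + h t) ≤ ∑ t ∈ Icc 1 n, 1 / ((((t - 1) / k : ℕ) : ℝ) + h t) := by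
  induction n generalizing c with
  | zero => simp
  | succ n ih =>
    obtain ⟨m, hm, hmax⟩ := (Icc 1 (n + 1)).exists_max_image c ⟨n + 1, by simp⟩
    have hlast : n / k ≤ c m := div_le_of_card_filter_le (by simp) hc hmax
    have hn : n + 1 ∈ Icc 1 (n + 1) := by simp
    set σ := Equiv.swap m (n + 1)
    have hexchange : ∑ t ∈ Icc 1 (n + 1), 1 / ((c t : ℝ) + h t)
        ≤ ∑ t ∈ Icc 1 (n + 1), 1 / ((c (σ t) : ℝ) + h t) :=
      sum_le_sum_comp_swap hm hn (fun i t => 1 / ((c i : ℝ) + h t)) <|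
        one_div_add_add_one_div_add_le (by have := hpos m; positivity) (mod_cast hmax (n + 1) hn)
          (hmono (mem_Icc.1 hm).2)
    have hcount (j : ℕ) : #{t ∈ Icc 1 n | c (σ t) ≤ j} ≤ (j + 1) * k :=
      calc #{t ∈ Icc 1 n | c (σ t) ≤ j}
          ≤ #{t ∈ Icc 1 (n + 1) | c (σ t) ≤ j} :=
            card_le_card (filter_subset_filter _ (Icc_subset_Icc_right n.le_succ))
        _ = #{t ∈ Icc 1 (n + 1) | c t ≤ j} := card_filter_comp_swap hm hn (c · ≤ j)
        _ ≤ (j + 1) * k := hc j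
    refine hexchange.trans ?_
    rw [sum_Icc_succ_top (by omega), sum_Icc_succ_top (by omega), Equiv.swap_apply_right,
      Nat.add_sub_cancel]
    gcongr ?_ + ?_
    · exact ih _ hcount
    · have := hpos (n + 1)
      exact one_div_le_one_div_of_le (by positivity) (by gcongr)

section prevCount

variable {α : Type*} [DecidableEq α]

def prevCount (x : ℕ → α) (t : ℕ) : ℕ := #{i ∈ Ico 1 t | x i = x t}

lemma prevCount_lt_prevCount (x : ℕ → α) {a b : ℕ} (ha : 1 ≤ a) (hab : a < b)
    (hx : x a = x b) : prevCount x a < prevCount x b := by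
  refine card_lt_card ⟨fun i hi => ?_, fun hsub => ?_⟩
  · simp only [mem_filter, mem_Ico] at hi ⊢
    exact ⟨⟨hi.1.1, hi.1.2.trans hab⟩, hi.2.trans hx⟩
  · simpa using hsub (mem_filter.2 ⟨mem_Ico.2 ⟨ha, hab⟩, hx⟩)

lemma card_filter_prevCount_le [Fintype α] (x : ℕ → α) (n j : ℕ) :
    #{t ∈ Icc 1 n | prevCount x t ≤ j} ≤ (j + 1) * Fintype.card α := by
  have hinj : Set.InjOn (fun t => (x t, prevCount x t)) {t | 1 ≤ t} := by
    intro a ha b hb hab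
    simp only [Set.mem_ofPred_eq, Prod.mk.injEq] at ha hb hab
    rcases lt_trichotomy a b with hlt | rfl | hlt
    · exact absurd hab.2 (prevCount_lt_prevCount x ha hlt hab.1).ne
    · rfl
    · exact absurd hab.2 (prevCount_lt_prevCount x hb hlt hab.1.symm).ne'
  calc #{t ∈ Icc 1 n | prevCount x t ≤ j}
      ≤ #(univ ×ˢ range (j + 1)) :=
        card_le_card_of_injOn _ (fun t _ => by simp_all)
          (hinj.mono fun t ht => by simp_all)
    _ = (j + 1) * Fintype.card α := by simp [mul_comm]

end prevCount

theorem round_robin_maximizes_general {X : Type*} [Fintype X] [DecidableEq X]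
    (k : ℕ) (hcard : Fintype.card X = k)
    (h : ℕ → ℝ) (hpos : ∀ t, 0 < h t) (hmono : Monotone h)
    (n : ℕ) (x : ℕ → X) :
    ∑ t ∈ Finset.Icc 1 n,
        1 / ((((Finset.Ico 1 t).filter (fun i => x i = x t)).card : ℝ) + h t)
      ≤ ∑ t ∈ Finset.Icc 1 n, 1 / ((((t - 1) / k : ℕ) : ℝ) + h t) := by
  exact sum_one_div_add_le_roundRobin hpos hmono k n (prevCount x)
    (hcard ▸ card_filter_prevCount_le x n)

theorem round_robin_maximizes {X : Type*} [Fintype X] [DecidableEq X]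
    (k : ℕ) (hcard : Fintype.card X = k) (hk : 0 < k)
    (h : ℕ → ℝ) (hpos : ∀ t, 0 < h t) (hmono : Monotone h)
    (n : ℕ) (x : ℕ → X) :
    ∑ t ∈ Finset.Icc 1 n,
        1 / ((((Finset.Ico 1 t).filter (fun i => x i = x t)).card : ℝ) + h t)
      ≤ ∑ t ∈ Finset.Icc 1 n, 1 / ((((t - 1) / k : ℕ) : ℝ) + h t) :=
  round_robin_maximizes_general k hcard h hpos hmono n x
end
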